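/- arXiv:0706.4054 — 7 statements merged into one kernel-verified Lean document; each statement's English description precedes it below -/
import Mathlib

section
/- The piecewise-linear map γₐ : ℤ² → ℤ² given by γₐ(a,b) = (max(a,0) − b, a) satisfies γₐ⁵ = Id. -/
/-- The piecewise-linear map γₐ(a,b) = (max(a,0) − b, a) on ℤ² satisfies γₐ⁵ = Id. -/
theorem tropical_map_order_five
    (g : ℤ × ℤ → ℤ × ℤ)
    (hg : g = fun p => (max p.1 0 - p.2, p.1)) :
    ∀ p : ℤ × ℤ, g^[5] p = p := by
  subst hg
  rintro ⟨a, b⟩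
  simp only [Function.iterate_succ, Function.iterate_zero, Function.comp_apply, id_eq,
    Prod.mk.injEq]
  constructor <;> omega
end

section
/- The map γₐ(a,b) = (max(a,0) − b, a) on ℤ² permutes the five cones {a ≤ 0, b ≥ 0}, {a ≤ 0, b ≤ 0}, {a ≥ 0, b ≤ 0}, {a ≥ b ≥ 0}, {b ≥ a ≥ 0} cyclically: it maps each cone onto the next one in this cyclic order. -/
/-- γₐ(a,b) = (max(a,0) − b, a) permutes the five cones of ℤ² cyclically. -/
theorem tropical_map_cyclic_on_cones
    (g : ℤ × ℤ → ℤ × ℤ)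
    (hg : g = fun p => (max p.1 0 - p.2, p.1))
    (C₁ C₂ C₃ C₄ C₅ : Set (ℤ × ℤ))
    (h₁ : C₁ = {p | p.1 ≤ 0 ∧ 0 ≤ p.2})
    (h₂ : C₂ = {p | p.1 ≤ 0 ∧ p.2 ≤ 0})
    (h₃ : C₃ = {p | 0 ≤ p.1 ∧ p.2 ≤ 0})
    (h₄ : C₄ = {p | 0 ≤ p.2 ∧ p.2 ≤ p.1})
    (h₅ : C₅ = {p | 0 ≤ p.1 ∧ p.1 ≤ p.2}) :
    g '' C₁ = C₂ ∧ g '' C₂ = C₃ ∧ g '' C₃ = C₄ ∧ g '' C₄ = C₅ ∧ g '' C₅ = C₁ := by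
  subst hg h₁ h₂ h₃ h₄ h₅
  refine ⟨?_, ?_, ?_, ?_, ?_⟩ <;>
  · ext ⟨x, y⟩
    simp only [Set.mem_image, Set.mem_setOf_eq, Prod.mk.injEq, Prod.exists]
    constructor
    · rintro ⟨a, b, ⟨ha, hb⟩, h1, h2⟩
      omega
    · rintro ⟨h1, h2⟩
      exact ⟨y, max y 0 - x, ⟨by omega, by omega⟩, by omega, by omega⟩
end

section
/- The q-deformed map γ*_q : X ↦ Y⁻¹, Y ↦ (1+qY)X extends to an automorphism of the fraction (skew) field of the quantum torus T_q (with relation XY = q²YX), and this automorphism has order 5. -/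
/-- The q-deformed map γ_q : X ↦ Y⁻¹, Y ↦ (1+qY)X extends to an automorphism of the
skew fraction field of the quantum torus (XY = q²YX), and this automorphism has order 5:
its fifth power fixes the generators X and Y (hence all of the field they generate). -/
theorem quantum_pentagon_automorphism_order_five
    (F : Type*) [DivisionRing F] (q X Y : F)
    (hq : q ≠ 0) (hX : X ≠ 0) (hY : Y ≠ 0)
    (hqX : Commute q X) (hqY : Commute q Y)
    (hrel : X * Y = q ^ 2 * (Y * X))
    (γ : RingAut F)
    (hγq : γ q = q)
    (hγX : γ X = Y⁻¹)
    (hγY : γ Y = (1 + q * Y) * X) :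
    (γ ^ 5) X = X ∧ (γ ^ 5) Y = Y := by
  have hq2 : (q ^ 2 : F) ≠ 0 := pow_ne_zero 2 hq
  -- commutation helpers
  have ci2Y : Commute ((q ^ 2)⁻¹) Y := (hqY.pow_left 2).inv_left₀
  have ci2X : Commute ((q ^ 2)⁻¹) X := (hqX.pow_left 2).inv_left₀
  have cqYi : Commute q Y⁻¹ := hqY.inv_right₀
  have cqXi : Commute q X⁻¹ := hqX.inv_right₀
  -- monomial commutation lemmas
  have m1 : Y * X = (q ^ 2)⁻¹ * (X * Y) := by
    rw [hrel, ← mul_assoc, inv_mul_cancel₀ hq2, one_mul]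
  have m2 : Y * (X * Y⁻¹) = (q ^ 2)⁻¹ * X := by
    calc Y * (X * Y⁻¹) = (Y * X) * Y⁻¹ := (mul_assoc Y X Y⁻¹).symm
    _ = (q ^ 2)⁻¹ * (X * Y) * Y⁻¹ := by rw [m1]
    _ = (q ^ 2)⁻¹ * (X * (Y * Y⁻¹)) := by rw [mul_assoc, mul_assoc X Y Y⁻¹]
    _ = (q ^ 2)⁻¹ * X := by rw [mul_inv_cancel₀ hY, mul_one]
  have mXYi : X * Y⁻¹ = (q ^ 2)⁻¹ * (Y⁻¹ * X) := by
    apply mul_left_cancel₀ hY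
    rw [m2, ci2Y.symm.left_comm, ← mul_assoc Y Y⁻¹ X, mul_inv_cancel₀ hY, one_mul]
  have m3 : X⁻¹ * Y = (q ^ 2)⁻¹ * (Y * X⁻¹) := by
    apply mul_left_cancel₀ hX
    calc X * (X⁻¹ * Y) = (X * X⁻¹) * Y := (mul_assoc X X⁻¹ Y).symm
    _ = Y := by rw [mul_inv_cancel₀ hX, one_mul]
    _ = (q ^ 2)⁻¹ * (q ^ 2 * (Y * X)) * X⁻¹ := by
        rw [← mul_assoc (q ^ 2)⁻¹ (q ^ 2) (Y * X), inv_mul_cancel₀ hq2, one_mul,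
          mul_assoc Y X X⁻¹, mul_inv_cancel₀ hX, mul_one]
    _ = (q ^ 2)⁻¹ * (X * Y) * X⁻¹ := by rw [hrel]
    _ = (q ^ 2)⁻¹ * (X * (Y * X⁻¹)) := by
        rw [mul_assoc, mul_assoc X Y X⁻¹]
    _ = X * ((q ^ 2)⁻¹ * (Y * X⁻¹)) := (ci2X.symm.left_comm _).symm
  have m5 : X⁻¹ * (Y * X) = (q ^ 2)⁻¹ * Y := by
    rw [← mul_assoc, m3, mul_assoc, mul_assoc, inv_mul_cancel₀ hX, mul_one]
  -- scalar arithmetic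
  have hqq2 : q * (q ^ 2)⁻¹ = q⁻¹ := by
    rw [sq, mul_inv_rev, ← mul_assoc, mul_inv_cancel₀ hq, one_mul]
  have q2qi : q ^ 2 * q⁻¹ = q := by
    rw [sq, mul_assoc, mul_inv_cancel₀ hq, mul_one]
  -- nonvanishing
  have hu : (1 + q * Y) ≠ 0 := by
    intro h
    apply hY
    apply γ.injective
    rw [map_zero, hγY, h, zero_mul]
  have huX : (1 + q * Y) * X ≠ 0 := mul_ne_zero hu hX
  -- step 2 : the image of (1+qY)X
  have a2 : γ ((1 + q * Y) * X) = (1 + q * ((1 + q * Y) * X)) * Y⁻¹ := by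
    rw [map_mul, map_add, map_one, map_mul, hγq, hγY, hγX]
  -- key algebraic identity
  have l1 : ((1 + q * Y) * X) * Y⁻¹ = (q ^ 2)⁻¹ * (Y⁻¹ * X) + q⁻¹ * X := by
    calc ((1 + q * Y) * X) * Y⁻¹ = X * Y⁻¹ + q * (Y * (X * Y⁻¹)) := by noncomm_ring
    _ = (q ^ 2)⁻¹ * (Y⁻¹ * X) + q * ((q ^ 2)⁻¹ * X) := by rw [m2, mXYi]
    _ = (q ^ 2)⁻¹ * (Y⁻¹ * X) + q⁻¹ * X := by
        rw [← mul_assoc q ((q ^ 2)⁻¹) X, hqq2]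
  have lhs_eq : 1 + q * ((1 + q * ((1 + q * Y) * X)) * Y⁻¹)
      = 1 + q * Y⁻¹ + Y⁻¹ * X + q * X := by
    calc 1 + q * ((1 + q * ((1 + q * Y) * X)) * Y⁻¹)
        = 1 + q * Y⁻¹ + q ^ 2 * (((1 + q * Y) * X) * Y⁻¹) := by noncomm_ring
    _ = 1 + q * Y⁻¹ + q ^ 2 * ((q ^ 2)⁻¹ * (Y⁻¹ * X) + q⁻¹ * X) := by rw [l1]
    _ = 1 + q * Y⁻¹ + (q ^ 2 * (q ^ 2)⁻¹) * (Y⁻¹ * X) + (q ^ 2 * q⁻¹) * X := by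
        noncomm_ring
    _ = 1 + q * Y⁻¹ + Y⁻¹ * X + q * X := by
        rw [mul_inv_cancel₀ hq2, one_mul, q2qi]
  have inner_eq : (1 + q * X⁻¹) * ((1 + q * Y) * X) = X + q * (Y * X) + q + Y := by
    calc (1 + q * X⁻¹) * ((1 + q * Y) * X)
        = X + q * (Y * X) + q * (X⁻¹ * X) + q * (X⁻¹ * (q * (Y * X))) := by
          noncomm_ring
    _ = X + q * (Y * X) + q * (X⁻¹ * X) + q * (q * (X⁻¹ * (Y * X))) := by
          rw [cqXi.symm.left_comm]
    _ = X + q * (Y * X) + q * 1 + q * (q * ((q ^ 2)⁻¹ * Y)) := by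
          rw [inv_mul_cancel₀ hX, m5]
    _ = X + q * (Y * X) + q + (q * q * (q ^ 2)⁻¹) * Y := by noncomm_ring
    _ = X + q * (Y * X) + q + Y := by rw [← sq, mul_inv_cancel₀ hq2, one_mul]
  have rhs_eq : Y⁻¹ * (1 + q * X⁻¹) * ((1 + q * Y) * X)
      = 1 + q * Y⁻¹ + Y⁻¹ * X + q * X := by
    calc Y⁻¹ * (1 + q * X⁻¹) * ((1 + q * Y) * X)
        = Y⁻¹ * ((1 + q * X⁻¹) * ((1 + q * Y) * X)) := by rw [mul_assoc]
    _ = Y⁻¹ * (X + q * (Y * X) + q + Y) := by rw [inner_eq]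
    _ = Y⁻¹ * X + Y⁻¹ * (q * (Y * X)) + Y⁻¹ * q + Y⁻¹ * Y := by noncomm_ring
    _ = Y⁻¹ * X + q * (Y⁻¹ * (Y * X)) + q * Y⁻¹ + 1 := by
          rw [cqYi.symm.left_comm, ← cqYi.eq, inv_mul_cancel₀ hY]
    _ = Y⁻¹ * X + q * X + q * Y⁻¹ + 1 := by
          rw [← mul_assoc Y⁻¹ Y X, inv_mul_cancel₀ hY, one_mul]
    _ = 1 + q * Y⁻¹ + Y⁻¹ * X + q * X := by abel
  have Nval : 1 + q * ((1 + q * ((1 + q * Y) * X)) * Y⁻¹)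
      = Y⁻¹ * (1 + q * X⁻¹) * ((1 + q * Y) * X) := by rw [lhs_eq, rhs_eq]
  -- step 3
  have a3 : γ (γ (γ Y)) = Y⁻¹ * (1 + q * X⁻¹) := by
    rw [hγY, a2, map_mul, map_add, map_one, map_mul, hγq, a2, map_inv₀, hγY,
      mul_inv_rev, Nval, mul_assoc (Y⁻¹ * (1 + q * X⁻¹)), ← mul_inv_rev,
      mul_assoc, mul_inv_cancel₀ huX, mul_one]
  -- step 4
  have a4 : γ (γ (γ (γ Y))) = X⁻¹ := by
    rw [a3, map_mul, map_inv₀, hγY, map_add, map_one, map_mul, hγq, map_inv₀,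
      hγX, inv_inv, mul_inv_rev, mul_assoc, inv_mul_cancel₀ hu, mul_one]
  constructor
  · show γ (γ (γ (γ (γ X)))) = X
    rw [hγX, map_inv₀, map_inv₀, map_inv₀, map_inv₀, a4, inv_inv]
  · show γ (γ (γ (γ (γ Y)))) = Y
    rw [a4, map_inv₀, hγX, inv_inv]
end

section
/- For each n ≥ 0 and a ∈ ℤ, the Laurent polynomial Xᵃ Y⁻ⁿ (1+qX⁻¹)(1+q³X⁻¹)⋯(1+q^{2n−1}X⁻¹) in the quantum torus T_q is mapped by γ (given by X ↦ Y⁻¹, Y ↦ (1+qY)X) to a Laurent polynomial (i.e. an element of T_q, not merely of its fraction field). -/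
private lemma zpow_mem_closure {F : Type*} [DivisionRing F] {S : Subring F} {z : F}
    (hz : z ∈ S) (hz' : z⁻¹ ∈ S) : ∀ m : ℤ, z ^ m ∈ S
  | Int.ofNat n => by simpa using S.pow_mem hz n
  | Int.negSucc n => by
      rw [zpow_negSucc, ← inv_pow]
      exact S.pow_mem hz' _

/-- For each n ≥ 0, a ∈ ℤ, the Laurent polynomial Xᵃ Y⁻ⁿ (1+qX⁻¹)(1+q³X⁻¹)⋯(1+q^{2n−1}X⁻¹)
is mapped by γ (X ↦ Y⁻¹, Y ↦ (1+qY)X) to an element of the quantum torus T_q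
(the subring generated by X^{±1}, Y^{±1}, q^{±1}), not merely of the fraction field. -/
theorem quantum_basis_element_maps_to_Laurent
    (F : Type*) [DivisionRing F] (q X Y : F)
    (hq : q ≠ 0) (hX : X ≠ 0) (hY : Y ≠ 0)
    (hqX : Commute q X) (hqY : Commute q Y)
    (hrel : X * Y = q ^ 2 * (Y * X))
    (γ : RingAut F)
    (hγq : γ q = q)
    (hγX : γ X = Y⁻¹)
    (hγY : γ Y = (1 + q * Y) * X) :
    ∀ (a : ℤ) (n : ℕ),
      γ (X ^ a * (Y ^ n)⁻¹ *
          ((List.range n).map (fun k => 1 + q ^ (2 * k + 1) * X⁻¹)).prod)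
        ∈ Subring.closure {X, X⁻¹, Y, Y⁻¹, q, q⁻¹} := by
  intro a n
  set S := Subring.closure {X, X⁻¹, Y, Y⁻¹, q, q⁻¹} with hS
  have hXim : X⁻¹ ∈ S := Subring.subset_closure (by simp)
  have hYm : Y ∈ S := Subring.subset_closure (by simp)
  have hYim : Y⁻¹ ∈ S := Subring.subset_closure (by simp)
  have hγXinv : γ X⁻¹ = Y := by rw [map_inv₀, hγX, inv_inv]
  -- shift lemma: move X past a factor
  have hshift : ∀ k : ℕ, X * (1 + q ^ (2 * k + 1) * Y) = (1 + q ^ (2 * k + 3) * Y) * X := by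
    intro k
    calc X * (1 + q ^ (2 * k + 1) * Y)
        = X + X * (q ^ (2 * k + 1) * Y) := by rw [mul_add, mul_one]
      _ = X + q ^ (2 * k + 1) * (X * Y) := by
          rw [← mul_assoc, ← (hqX.pow_left _).eq, mul_assoc]
      _ = X + q ^ (2 * k + 3) * (Y * X) := by
          rw [hrel, ← mul_assoc, ← pow_add]
      _ = (1 + q ^ (2 * k + 3) * Y) * X := by rw [add_mul, one_mul, mul_assoc]
  -- move X^n past (1 + q*Y)
  have hpow : ∀ m : ℕ, X ^ m * (1 + q * Y) = (1 + q ^ (2 * m + 1) * Y) * X ^ m := by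
    intro m
    induction m with
    | zero => simp
    | succ m ih =>
        have h0 := hshift m
        calc X ^ (m + 1) * (1 + q * Y) = X * (X ^ m * (1 + q * Y)) := by
              rw [pow_succ', mul_assoc]
          _ = X * (1 + q ^ (2 * m + 1) * Y) * X ^ m := by rw [ih, mul_assoc]
          _ = (1 + q ^ (2 * m + 3) * Y) * X ^ (m + 1) := by
              rw [h0, mul_assoc, ← pow_succ']
          _ = (1 + q ^ (2 * (m + 1) + 1) * Y) * X ^ (m + 1) := by ring_nf
  -- powers of (1+qY)X
  have hprod : ∀ m : ℕ, ((1 + q * Y) * X) ^ m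
      = ((List.range m).map (fun k => 1 + q ^ (2 * k + 1) * Y)).prod * X ^ m := by
    intro m
    induction m with
    | zero => simp
    | succ m ih =>
        rw [pow_succ, ih, List.range_succ, List.map_append, List.prod_append]
        simp only [List.map_cons, List.map_nil, List.prod_cons, List.prod_nil, mul_one]
        calc ((List.range m).map (fun k => 1 + q ^ (2 * k + 1) * Y)).prod * X ^ m
              * ((1 + q * Y) * X)
            = ((List.range m).map (fun k => 1 + q ^ (2 * k + 1) * Y)).prod
              * (X ^ m * (1 + q * Y)) * X := by
              rw [mul_assoc, mul_assoc, mul_assoc]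
          _ = ((List.range m).map (fun k => 1 + q ^ (2 * k + 1) * Y)).prod
              * ((1 + q ^ (2 * m + 1) * Y) * (X ^ m * X)) := by
              rw [hpow m]; rw [mul_assoc, mul_assoc]
          _ = ((List.range m).map (fun k => 1 + q ^ (2 * k + 1) * Y)).prod
              * (1 + q ^ (2 * m + 1) * Y) * X ^ (m + 1) := by
              rw [← pow_succ, mul_assoc]
  set P : F := ((List.range n).map (fun k => 1 + q ^ (2 * k + 1) * Y)).prod with hP
  -- compute γ of the element
  have hmain : γ (X ^ a * (Y ^ n)⁻¹ *
      ((List.range n).map (fun k => 1 + q ^ (2 * k + 1) * X⁻¹)).prod)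
      = (Y⁻¹) ^ a * (P * X ^ n)⁻¹ * P := by
    rw [map_mul, map_mul, map_zpow₀, hγX, map_inv₀, map_pow, hγY, ← hprod]
    congr 1
    rw [map_list_prod, List.map_map]
    congr 1
    apply List.map_congr_left
    intro k _
    simp [map_add, map_mul, map_pow, hγq, hγXinv]
  rw [hmain]
  by_cases hP0 : P = 0
  · rw [hP0, mul_zero]
    exact S.zero_mem
  · rw [mul_inv_rev, ← mul_assoc, mul_assoc, inv_mul_cancel₀ hP0, mul_one]
    refine S.mul_mem (zpow_mem_closure hYim (by rwa [inv_inv]) a) ?_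
    rw [← inv_pow]
    exact S.pow_mem hXim n
end

section
/- The canonical map 𝕀 is γ-equivariant: for all (a,b) ∈ ℤ², applying the substitution X ↦ Y⁻¹, Y ↦ (1+Y)X to 𝕀(γₐ(a,b)) yields 𝕀(a,b), where γₐ(a,b) = (max(a,0) − b, a). -/
noncomputable section

/-- The field ℚ(X,Y) of rational functions in two variables. -/
abbrev RatField : Type := FractionRing (MvPolynomial (Fin 2) ℚ)

noncomputable def Xv : RatField :=
  algebraMap (MvPolynomial (Fin 2) ℚ) RatField (MvPolynomial.X 0)

noncomputable def Yv : RatField :=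
  algebraMap (MvPolynomial (Fin 2) ℚ) RatField (MvPolynomial.X 1)

/-- The canonical function 𝕀(a,b), defined piecewise over the five cones. -/
noncomputable def Ican (a b : ℤ) : RatField :=
  if a ≤ 0 ∧ 0 ≤ b then Xv ^ a * Yv ^ b
  else if a ≤ 0 ∧ b ≤ 0 then ((1 + Xv) / (Xv * Yv)) ^ (-b) * Xv ^ a
  else if 0 ≤ a ∧ b ≤ 0 then
    ((1 + Xv + Xv * Yv) / Yv) ^ a * ((1 + Xv) / (Xv * Yv)) ^ (-b)
  else if 0 ≤ b ∧ b ≤ a then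
    ((1 + Yv) * Xv) ^ b * ((1 + Xv + Xv * Yv) / Yv) ^ (a - b)
  else Yv ^ (b - a) * ((1 + Yv) * Xv) ^ a

lemma algMap_inj :
    Function.Injective (algebraMap (MvPolynomial (Fin 2) ℚ) RatField) :=
  IsFractionRing.injective _ _

lemma Xv_ne : Xv ≠ 0 := by
  simpa [Xv, map_ne_zero_iff _ algMap_inj] using MvPolynomial.X_ne_zero (R := ℚ) 0

lemma Yv_ne : Yv ≠ 0 := by
  simpa [Yv, map_ne_zero_iff _ algMap_inj] using MvPolynomial.X_ne_zero (R := ℚ) 1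

lemma oneY_ne : (1 : RatField) + Yv ≠ 0 := by
  have h : (1 : RatField) + Yv =
      algebraMap (MvPolynomial (Fin 2) ℚ) RatField (1 + MvPolynomial.X 1) := by
    simp [Yv, map_add]
  rw [h, map_ne_zero_iff _ algMap_inj]
  intro hc
  have := congrArg (MvPolynomial.eval (fun _ => (0 : ℚ))) hc
  simp at this

lemma Ican_def1 (a b : ℤ) (ha : a ≤ 0) (hb : 0 ≤ b) :
    Ican a b = Xv ^ a * Yv ^ b := by
  unfold Ican; rw [if_pos ⟨ha, hb⟩]

lemma Ican_def2 (a b : ℤ) (ha : a ≤ 0) (hb : b ≤ 0) :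
    Ican a b = ((1 + Xv) / (Xv * Yv)) ^ (-b) * Xv ^ a := by
  unfold Ican
  by_cases h1 : a ≤ 0 ∧ 0 ≤ b
  · have hb0 : b = 0 := le_antisymm hb h1.2
    subst hb0; rw [if_pos h1]; simp
  · rw [if_neg h1, if_pos ⟨ha, hb⟩]

lemma Ican_def3 (a b : ℤ) (ha : 0 ≤ a) (hb : b ≤ 0) :
    Ican a b = ((1 + Xv + Xv * Yv) / Yv) ^ a * ((1 + Xv) / (Xv * Yv)) ^ (-b) := by
  unfold Ican
  by_cases h1 : a ≤ 0 ∧ 0 ≤ b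
  · have ha0 : a = 0 := le_antisymm h1.1 ha
    have hb0 : b = 0 := le_antisymm hb h1.2
    subst ha0; subst hb0; simp
  · rw [if_neg h1]
    by_cases h2 : a ≤ 0 ∧ b ≤ 0
    · have ha0 : a = 0 := le_antisymm h2.1 ha
      subst ha0; rw [if_pos ⟨h2.1, hb⟩]; simp
    · rw [if_neg h2, if_pos ⟨ha, hb⟩]

lemma Ican_def4 (a b : ℤ) (hb : 0 ≤ b) (hba : b ≤ a) :
    Ican a b = ((1 + Yv) * Xv) ^ b * ((1 + Xv + Xv * Yv) / Yv) ^ (a - b) := by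
  unfold Ican
  by_cases h1 : a ≤ 0 ∧ 0 ≤ b
  · have ha0 : a = 0 := by omega
    have hb0 : b = 0 := by omega
    subst ha0; subst hb0; simp
  · rw [if_neg h1]
    by_cases h2 : a ≤ 0 ∧ b ≤ 0
    · exact absurd h1 (by omega)
    · rw [if_neg h2]
      by_cases h3 : 0 ≤ a ∧ b ≤ 0
      · have hb0 : b = 0 := by omega
        subst hb0; rw [if_pos h3]; simp
      · rw [if_neg h3, if_pos ⟨hb, hba⟩]

lemma Ican_def5 (a b : ℤ) (ha : 0 ≤ a) (hab : a ≤ b) :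
    Ican a b = Yv ^ (b - a) * ((1 + Yv) * Xv) ^ a := by
  unfold Ican
  by_cases h1 : a ≤ 0 ∧ 0 ≤ b
  · have ha0 : a = 0 := by omega
    subst ha0; rw [if_pos h1]; simp
  · rw [if_neg h1]
    by_cases h2 : a ≤ 0 ∧ b ≤ 0
    · exact absurd h1 (by omega)
    · rw [if_neg h2]
      by_cases h3 : 0 ≤ a ∧ b ≤ 0
      · exact absurd h1 (by omega)
      · rw [if_neg h3]
        by_cases h4 : 0 ≤ b ∧ b ≤ a
        · have hab0 : a = b := by omega
          subst hab0; rw [if_pos h4]; simp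
        · rw [if_neg h4]

-- base identities
lemma base1 : (1 + Yv⁻¹) / (Yv⁻¹ * ((1 + Yv) * Xv)) = Xv⁻¹ := by
  field_simp [Xv_ne, Yv_ne, oneY_ne]
  ring

lemma base2 : (1 + Yv⁻¹ + Yv⁻¹ * ((1 + Yv) * Xv)) / ((1 + Yv) * Xv)
    = (1 + Xv) / (Xv * Yv) := by
  rw [div_eq_div_iff (by exact mul_ne_zero oneY_ne Xv_ne) (mul_ne_zero Xv_ne Yv_ne)]
  field_simp [Xv_ne, Yv_ne, oneY_ne]
  ring

lemma base3 : (1 + (1 + Yv) * Xv) * Yv⁻¹ = (1 + Xv + Xv * Yv) / Yv := by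
  field_simp
  ring

/-- The canonical map 𝕀 is γ-equivariant: applying the substitution X ↦ Y⁻¹,
Y ↦ (1+Y)X to 𝕀(γₐ(a,b)) gives back 𝕀(a,b), where γₐ(a,b) = (max(a,0) − b, a). -/
theorem canonical_map_equivariant
    (γ : RatField →+* RatField)
    (hγX : γ Xv = Yv⁻¹)
    (hγY : γ Yv = (1 + Yv) * Xv) :
    ∀ a b : ℤ, γ (Ican (max a 0 - b) a) = Ican a b := by
  intro a b
  by_cases ha : 0 ≤ a
  · have hmax : max a 0 = a := by omega
    rw [hmax]
    by_cases hb : b ≤ 0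
    · -- cone 3; γ point in cone 4
      rw [Ican_def4 (a - b) a ha (by omega), Ican_def3 a b ha hb]
      simp only [map_mul, map_zpow₀, map_div₀, map_add, map_one, hγX, hγY]
      rw [base3, base2]
      congr 1
      rw [show a - b - a = -b by ring]
    · by_cases hba : b ≤ a
      · -- cone 4; γ point in cone 5
        rw [Ican_def5 (a - b) a (by omega) (by omega), Ican_def4 a b (by omega) hba]
        simp only [map_mul, map_zpow₀, map_div₀, map_add, map_one, hγX, hγY]
        rw [base3, show a - (a - b) = b by ring]
      · -- cone 5; γ point in cone 1
        rw [Ican_def1 (a - b) a (by omega) ha, Ican_def5 a b ha (by omega)]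
        simp only [map_mul, map_zpow₀, map_div₀, map_add, map_one, hγX, hγY]
        rw [inv_zpow, ← zpow_neg, show -(a - b) = b - a by ring]
  · have hmax : max a 0 = 0 := by omega
    rw [hmax, zero_sub]
    by_cases hb : 0 ≤ b
    · -- cone 1; γ point in cone 2
      rw [Ican_def2 (-b) a (by omega) (by omega), Ican_def1 a b (by omega) hb]
      simp only [map_mul, map_zpow₀, map_div₀, map_add, map_one, hγX, hγY]
      rw [base1, inv_zpow, ← zpow_neg, neg_neg, inv_zpow, ← zpow_neg, neg_neg]
    · -- cone 2; γ point in cone 3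
      rw [Ican_def3 (-b) a (by omega) (by omega), Ican_def2 a b (by omega) (by omega)]
      simp only [map_mul, map_zpow₀, map_div₀, map_add, map_one, hγX, hγY]
      rw [base2, base1, inv_zpow, ← zpow_neg, neg_neg]

end
end

section
/- Let F : ℍ → ℂ be a function holomorphic on the upper half plane which is invariant under translation by 2πi(m + nℏ) for all positive integers m, n, where ℏ > 0 is irrational; then F is constant. -/
/-!
The translations `c` with `F (z + c) = F z` whenever `z` and `z + c` lie in the upper half-plane
form an additive subgroup of `ℂ`. By hypothesis it contains `2πi` and `2πiℏ`, hence the dense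
subgroup `2πi(ℤ + ℤℏ)` of `iℝ`, so it accumulates at `0`. Holomorphy then forces `F` to be
constant: near any `z`, `F` takes the value `F z` at the points `z + c` with `c` a small period,
and the identity theorem applies on the connected upper half-plane.
-/

open Complex Real Filter Topology Set

def halfSpacePeriods {E α : Type*} [AddCommGroup E] (φ : E →+ ℝ) (F : E → α) : AddSubgroup E where
  carrier := {c | ∀ z, 0 < φ z → 0 < φ (z + c) → F (z + c) = F z}
  zero_mem' := by simp
  add_mem' := by
    intro a b ha hb z hz hzab
    -- whichever of `a`, `b` does not decrease `φ` keeps the intermediate point in the half-space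
    rcases le_or_gt 0 (φ a) with hφa | hφa
    · have hza : 0 < φ (z + a) := by rw [map_add]; linarith
      rw [← add_assoc] at hzab ⊢
      rw [hb _ hza hzab, ha z hz hza]
    · have hzb : 0 < φ (z + b) := by simp only [map_add] at hzab ⊢; linarith
      rw [add_comm a, ← add_assoc] at hzab ⊢
      rw [ha _ hzb hzab, hb z hz hzb]
  neg_mem' := by
    intro c hc z hz hzc
    simpa using (hc (z + -c) hzc (by simpa using hz)).symm

theorem mem_halfSpacePeriods {E α : Type*} [AddCommGroup E] {φ : E →+ ℝ} {F : E → α} {c : E} :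
    c ∈ halfSpacePeriods φ F ↔ ∀ z, 0 < φ z → 0 < φ (z + c) → F (z + c) = F z :=
  Iff.rfl

theorem AddSubgroup.frequently_mem_nhdsNE_zero_of_irrational {E : Type*} [NormedAddCommGroup E]
    [NormedSpace ℝ E] (P : AddSubgroup E) {v : E} (hv : v ≠ 0) {a b : ℝ} (ha : a • v ∈ P)
    (hb : b • v ∈ P) (hab : Irrational (a / b)) : ∃ᶠ x in 𝓝[≠] (0 : E), x ∈ P := by
  set Λ := AddSubgroup.closure ({a, b} : Set ℝ)
  have hΛP : ∀ t ∈ Λ, t • v ∈ P := by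
    have hle : Λ ≤ P.comap (LinearMap.toSpanSingleton ℝ E v).toAddMonoidHom :=
      AddSubgroup.closure_le _ |>.2 (pair_subset ha hb)
    exact fun t ht => hle ht
  have hΛ : ∃ᶠ t in 𝓝[≠] (0 : ℝ), t ∈ (Λ : Set ℝ) := by
    rw [← mem_closure_ne_iff_frequently_within,
      ((dense_addSubgroupClosure_pair_iff.2 hab).sdiff_singleton 0).closure_eq]
    exact mem_univ _
  have hsmul : Tendsto (· • v) (𝓝[≠] (0 : ℝ)) (𝓝[≠] (0 : E)) := by
    refine tendsto_nhdsWithin_of_tendsto_nhds_of_eventually_within _ ?_ ?_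
    · exact ((continuous_id.smul continuous_const).tendsto' 0 0 (zero_smul ℝ v)).mono_left
        nhdsWithin_le_nhds
    · exact eventually_nhdsWithin_of_forall fun t ht => smul_ne_zero ht hv
  exact hsmul.frequently (hΛ.mono hΛP)

theorem eq_of_frequently_mem_halfSpacePeriods_im {E : Type*} [NormedAddCommGroup E]
    [NormedSpace ℂ E] [CompleteSpace E] {F : ℂ → E} (hF : DifferentiableOn ℂ F {z | 0 < z.im})
    (hP : ∃ᶠ c in 𝓝[≠] (0 : ℂ), c ∈ halfSpacePeriods imAddGroupHom F) {z w : ℂ}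
    (hz : 0 < z.im) (hw : 0 < w.im) : F z = F w := by
  have hH : IsOpen {z : ℂ | 0 < z.im} := isOpen_lt continuous_const continuous_im
  have htrans : Tendsto (z + ·) (𝓝[≠] 0) (𝓝[≠] z) := by
    refine tendsto_nhdsWithin_of_tendsto_nhds_of_eventually_within _ ?_ ?_
    · exact ((continuous_const_add z).tendsto' 0 z (add_zero z)).mono_left nhdsWithin_le_nhds
    · exact eventually_nhdsWithin_of_forall fun c hc => by simpa using hc
  have hnear : ∀ᶠ c in 𝓝[≠] 0, 0 < (z + c).im :=
    htrans.eventually (eventually_nhdsWithin_of_eventually_nhds (hH.mem_nhds hz))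
  have hfreq : ∃ᶠ u in 𝓝[≠] z, F u = F z := htrans.frequently <|
    (hP.and_eventually hnear).mono fun c ⟨hc, hzc⟩ => mem_halfSpacePeriods.1 hc z hz hzc
  exact ((hF.analyticOnNhd hH).eqOn_of_preconnected_of_frequently_eq analyticOnNhd_const
    (convex_halfSpace_im_gt 0).isPreconnected hz hfreq hw).symm

theorem periodic_holomorphic_is_constant_general
    (ℏ : ℝ) (hirr : Irrational ℏ)
    (F : ℂ → ℂ)
    (hol : DifferentiableOn ℂ F {z : ℂ | 0 < z.im})
    (hinv : ∀ (m n : ℕ), 0 < m → 0 < n → ∀ z : ℂ, 0 < z.im →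
      F (z + 2 * Real.pi * Complex.I * ((m : ℂ) + (n : ℂ) * (ℏ : ℂ))) = F z) :
    ∀ z w : ℂ, 0 < z.im → 0 < w.im → F z = F w := by
  set P := halfSpacePeriods imAddGroupHom F
  have hmn : ∀ m n : ℕ, 0 < m → 0 < n → 2 * π * I * (m + n * ℏ) ∈ P :=
    fun m n hm hn => mem_halfSpacePeriods.2 fun z hz _ => hinv m n hm hn z hz
  have h2π : (2 * π) • I ∈ P := by
    convert sub_mem (hmn 2 1 two_pos one_pos) (hmn 1 1 one_pos one_pos) using 1
    push_cast [Complex.real_smul]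
    ring
  have h2πℏ : (2 * π * ℏ) • I ∈ P := by
    convert sub_mem (hmn 1 1 one_pos one_pos) h2π using 1
    push_cast [Complex.real_smul]
    ring
  have hratio : Irrational (2 * π * ℏ / (2 * π)) := by
    rwa [mul_div_cancel_left₀ ℏ (by positivity)]
  intro z w hz hw
  exact eq_of_frequently_mem_halfSpacePeriods_im hol
    (P.frequently_mem_nhdsNE_zero_of_irrational I_ne_zero h2πℏ h2π hratio) hz hw

/-- A function holomorphic on the upper half plane and invariant under the translations
z ↦ z + 2πi(m + nℏ) for all positive integers m, n, with ℏ > 0 irrational, is constant. -/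
theorem periodic_holomorphic_is_constant
    (ℏ : ℝ) (hℏ : 0 < ℏ) (hirr : Irrational ℏ)
    (F : ℂ → ℂ)
    (hol : DifferentiableOn ℂ F {z : ℂ | 0 < z.im})
    (hinv : ∀ (m n : ℕ), 0 < m → 0 < n → ∀ z : ℂ, 0 < z.im →
      F (z + 2 * Real.pi * Complex.I * ((m : ℂ) + (n : ℂ) * (ℏ : ℂ))) = F z) :
    ∀ z w : ℂ, 0 < z.im → 0 < w.im → F z = F w :=
  periodic_holomorphic_is_constant_general ℏ hirr F hol hinv
end

section
/- If a bounded linear operator M on L²(ℝ) commutes with multiplication by e^{nx} for all positive integers n (on the common domain E = {f ∈ L² : e^{nx} f ∈ L² for all n > 0}), then M restricted to E is multiplication by a fixed measurable function F(x). -/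
/-!
Write `σ(x) = (1 + eˣ)⁻¹ = sigmoid (-x)`. For `f ∈ E` also `σ f ∈ E`, and `f = eˣ (σ f) + σ f`, so
commutation with `eˣ` gives `M (σ f) = σ · M f`. Iterating from the Gaussian `g ∈ E`,
`M (P(σ) g) = P(σ) · M g` for every polynomial `P`, i.e. `g · M v = (M g) · v` for `v = P(σ) g`.
Such `v` are dense in `L²`: approximate by a compactly supported continuous `h`; then `h / g`,
read through the open embedding `σ : ℝ → [0, 1]`, extends continuously to `[0, 1]`, where
Weierstrass applies. The identity survives `L²` limits (pass to a.e. convergent subsequences), so it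
holds for every `v`, and `F = (M g) / g`.
-/
open MeasureTheory Topology Polynomial Set
open scoped ENNReal

theorem HasCompactSupport.continuous_extend_zero_of_isOpenEmbedding {X Y β : Type*}
    [TopologicalSpace X] [TopologicalSpace Y] [T2Space Y] [TopologicalSpace β] [Zero β]
    {e : X → Y} (he : IsOpenEmbedding e) {G : X → β} (hG : Continuous G)
    (hGc : HasCompactSupport G) : Continuous (Function.extend e G 0) :=
  continuous_of_tsupport fun _ hy => by
    obtain ⟨x, -, rfl⟩ := hGc.tsupport_extend_zero_subset he.continuous hy
    rw [← he.continuousAt_iff, Function.extend_comp he.injective]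
    exact hG.continuousAt

theorem exists_complex_polynomial_near_of_continuousOn (a b : ℝ) {f : ℝ → ℂ}
    (hf : ContinuousOn f (Icc a b)) {ε : ℝ} (hε : 0 < ε) :
    ∃ P : ℂ[X], ∀ x ∈ Icc a b, ‖P.eval (x : ℂ) - f x‖ < ε := by
  obtain ⟨p, hp⟩ := exists_polynomial_near_of_continuousOn a b (fun x => (f x).re)
    (Complex.continuous_re.comp_continuousOn hf) (ε / 2) (half_pos hε)
  obtain ⟨q, hq⟩ := exists_polynomial_near_of_continuousOn a b (fun x => (f x).im)
    (Complex.continuous_im.comp_continuousOn hf) (ε / 2) (half_pos hε)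
  refine ⟨p.map Complex.ofRealHom + C Complex.I * q.map Complex.ofRealHom, fun x hx => ?_⟩
  have hx_eval : (p.map Complex.ofRealHom + C Complex.I * q.map Complex.ofRealHom).eval (x : ℂ)
      = ((p.eval x : ℝ) : ℂ) + Complex.I * ((q.eval x : ℝ) : ℂ) := by
    simp only [eval_add, eval_mul, eval_C, eval_map, ← Complex.ofRealHom_eq_coe, eval₂_hom]
  calc _ ≤ |(_ : ℂ).re| + |(_ : ℂ).im| := Complex.norm_le_abs_re_add_abs_im _
    _ < ε / 2 + ε / 2 := by
        rw [hx_eval]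
        simpa using add_lt_add (hp x hx) (hq x hx)
    _ = ε := add_halves ε

theorem exists_polynomial_comp_near_of_isOpenEmbedding {X : Type*} [TopologicalSpace X]
    {a b : ℝ} {e : X → ℝ} (he : IsOpenEmbedding e) (he_range : range e ⊆ Icc a b)
    {G : X → ℂ} (hG : Continuous G) (hGc : HasCompactSupport G) {ε : ℝ} (hε : 0 < ε) :
    ∃ P : ℂ[X], ∀ x, ‖P.eval (e x : ℂ) - G x‖ < ε := by
  obtain ⟨P, hP⟩ := exists_complex_polynomial_near_of_continuousOn a b
    (hGc.continuous_extend_zero_of_isOpenEmbedding he hG).continuousOn hε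
  refine ⟨P, fun x => ?_⟩
  simpa only [he.injective.extend_apply] using hP (e x) (he_range (mem_range_self x))

theorem Real.isOpenEmbedding_sigmoid : IsOpenEmbedding Real.sigmoid :=
  ⟨Real.sigmoid_strictMono.isEmbedding_of_ordConnected (Real.range_sigmoid ▸ ordConnected_Ioo),
    Real.range_sigmoid ▸ isOpen_Ioo⟩

theorem isClosed_setOf_ae_mul_eq_mul {α R : Type*} [MeasurableSpace α] {μ : Measure α}
    [NormedRing R] {p : ℝ≥0∞} [Fact (1 ≤ p)] {T : Lp R p μ → Lp R p μ} (hT : Continuous T)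
    (a b : α → R) : IsClosed {v : Lp R p μ | ∀ᵐ x ∂μ, a x * T v x = b x * v x} := by
  refine IsSeqClosed.isClosed fun v w hv hvw => ?_
  obtain ⟨ns, hns, hv_ae⟩ := (tendstoInMeasure_of_tendsto_Lp hvw).exists_seq_tendsto_ae
  obtain ⟨ms, hms, hTv_ae⟩ := (tendstoInMeasure_of_tendsto_Lp
    ((hT.tendsto w).comp (hvw.comp hns.tendsto_atTop))).exists_seq_tendsto_ae
  filter_upwards [hv_ae, hTv_ae, ae_all_iff.mpr hv] with x hvx hTvx hx
  exact tendsto_nhds_unique ((hTvx.const_mul (a x)).congr fun i => hx _)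
    ((hvx.comp hms.tendsto_atTop).const_mul (b x))

theorem exists_polynomial_sigmoid_mul_near {w : ℝ → ℂ} (hw : Continuous w) (hw0 : ∀ x, w x ≠ 0)
    (hw2 : MemLp w 2 volume) {f : ℝ → ℂ} (hf : MemLp f 2 volume) {ε : ℝ} (hε : 0 < ε) :
    ∃ P : ℂ[X], eLpNorm (f - fun x => P.eval (Real.sigmoid (-x) : ℂ) * w x) 2 volume
      < ENNReal.ofReal ε := by
  have hε2 : ENNReal.ofReal (ε / 2) ≠ 0 := by simpa using half_pos hε
  obtain ⟨g, hg_supp, hfg, hg, -⟩ :=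
    hf.exists_hasCompactSupport_eLpNorm_sub_le ENNReal.ofNat_ne_top hε2
  obtain ⟨δ, hδ, hδw⟩ := ENNReal.exists_nnreal_pos_mul_lt hw2.eLpNorm_ne_top hε2
  have he : IsOpenEmbedding fun x : ℝ => Real.sigmoid (-x) :=
    Real.isOpenEmbedding_sigmoid.comp (Homeomorph.neg ℝ).isOpenEmbedding
  obtain ⟨P, hP⟩ := exists_polynomial_comp_near_of_isOpenEmbedding he
    (a := 0) (b := 1) (by rintro _ ⟨x, rfl⟩; exact ⟨Real.sigmoid_nonneg _, Real.sigmoid_le_one _⟩)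
    (G := fun x => g x * (w x)⁻¹) (hg.mul (hw.inv₀ hw0)) hg_supp.mul_right (NNReal.coe_pos.2 hδ)
  set h : ℝ → ℂ := fun x => P.eval (Real.sigmoid (-x) : ℂ) * w x
  have hh : Continuous h := by fun_prop
  have hgh : eLpNorm (g - h) 2 volume ≤ δ * eLpNorm w 2 volume := by
    rw [← ENNReal.ofReal_coe_nnreal]
    refine eLpNorm_le_mul_eLpNorm_of_ae_le_mul (ae_of_all _ fun x => ?_) 2
    have : g x - h x = -((P.eval (Real.sigmoid (-x) : ℂ) - g x * (w x)⁻¹) * w x) := by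
      simp only [h]; field_simp [hw0 x]; ring
    rw [Pi.sub_apply, this, norm_neg, norm_mul]
    exact mul_le_mul_of_nonneg_right (hP x).le (norm_nonneg _)
  refine ⟨P, ?_⟩
  calc eLpNorm (f - h) 2 volume = eLpNorm ((f - g) + (g - h)) 2 volume := by
        rw [sub_add_sub_cancel]
    _ ≤ eLpNorm (f - g) 2 volume + eLpNorm (g - h) 2 volume :=
        eLpNorm_add_le (hf.1.sub hg.aestronglyMeasurable)
          (hg.sub hh).aestronglyMeasurable one_le_two
    _ < ENNReal.ofReal (ε / 2) + ENNReal.ofReal (ε / 2) :=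
        ENNReal.add_lt_add_of_le_of_lt (hfg.trans_lt ENNReal.ofReal_lt_top).ne hfg
          (hgh.trans_lt hδw)
    _ = ENNReal.ofReal ε := by rw [← ENNReal.ofReal_add (by positivity) (by positivity), add_halves]

theorem MeasureTheory.MemLp.sigmoid_neg_mul {μ : Measure ℝ} {p : ℝ≥0∞} {f : ℝ → ℂ}
    (hf : MemLp f p μ) : MemLp (fun x => (Real.sigmoid (-x) : ℂ) * f x) p μ := by
  refine hf.of_le_mul (c := 1) ((Complex.continuous_ofReal.comp
    (continuous_sigmoid.comp continuous_neg)).aestronglyMeasurable.mul hf.1)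
    (ae_of_all _ fun x => ?_)
  rw [norm_mul, Complex.norm_real, Real.norm_of_nonneg (Real.sigmoid_nonneg _)]
  exact mul_le_mul_of_nonneg_right (Real.sigmoid_le_one _) (norm_nonneg _)

theorem exp_mul_sigmoid_neg_add_sigmoid_neg (x : ℝ) :
    (Real.exp x : ℂ) * (Real.sigmoid (-x) : ℂ) + (Real.sigmoid (-x) : ℂ) = 1 := by
  have : Real.exp x * Real.sigmoid (-x) + Real.sigmoid (-x) = 1 := by
    rw [Real.sigmoid_def, neg_neg]
    field_simp [(Real.exp_pos x).ne']
    ring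
  exact_mod_cast this

noncomputable section

namespace ExpCommutant

def gaussian (x : ℝ) : ℂ := (Real.exp (-x ^ 2) : ℝ)

theorem continuous_gaussian : Continuous gaussian := by
  unfold gaussian; fun_prop

theorem gaussian_ne_zero (x : ℝ) : gaussian x ≠ 0 :=
  Complex.ofReal_ne_zero.2 (Real.exp_pos _).ne'

theorem memLp_exp_mul_gaussian (c : ℝ) :
    MemLp (fun x : ℝ => (Real.exp (c * x) : ℂ) * gaussian x) 2 volume := by
  rw [memLp_two_iff_integrable_sq_norm (by unfold gaussian; fun_prop)]
  have h : (fun x : ℝ => ‖(Real.exp (c * x) : ℂ) * gaussian x‖ ^ 2)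
      = fun x => Real.exp (c ^ 2 / 2) * Real.exp (-2 * (x - c / 2) ^ 2) := by
    funext x
    rw [gaussian, norm_mul, Complex.norm_real, Complex.norm_real,
      Real.norm_of_nonneg (Real.exp_pos _).le, Real.norm_of_nonneg (Real.exp_pos _).le,
      ← Real.exp_add, ← Real.exp_nat_mul, ← Real.exp_add]
    ring_nf
  rw [h]
  exact ((integrable_exp_neg_mul_sq two_pos).comp_sub_right (c / 2)).const_mul _

theorem memLp_gaussian : MemLp gaussian 2 volume := by
  simpa using memLp_exp_mul_gaussian 0

def gaussianLp : Lp ℂ 2 (volume : Measure ℝ) := memLp_gaussian.toLp gaussian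

theorem coeFn_gaussianLp : gaussianLp =ᵐ[volume] gaussian := memLp_gaussian.coeFn_toLp

def expDomain : Set (Lp ℂ 2 (volume : Measure ℝ)) :=
  {f | ∀ n : ℕ, 0 < n → MemLp (fun x : ℝ => (Real.exp (n * x) : ℂ) * f x) 2 (volume : Measure ℝ)}

theorem gaussianLp_mem_expDomain : gaussianLp ∈ expDomain := fun n _ =>
  (memLp_exp_mul_gaussian n).ae_eq <| by
    filter_upwards [coeFn_gaussianLp] with x hx
    rw [hx]

def sigmoidMul (f : Lp ℂ 2 (volume : Measure ℝ)) : Lp ℂ 2 (volume : Measure ℝ) :=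
  (Lp.memLp f).sigmoid_neg_mul.toLp _

theorem coeFn_sigmoidMul (f : Lp ℂ 2 (volume : Measure ℝ)) :
    sigmoidMul f =ᵐ[volume] fun x => (Real.sigmoid (-x) : ℂ) * f x :=
  (Lp.memLp f).sigmoid_neg_mul.coeFn_toLp

theorem coeFn_iterate_sigmoidMul (f : Lp ℂ 2 (volume : Measure ℝ)) (k : ℕ) :
    sigmoidMul^[k] f =ᵐ[volume] fun x => (Real.sigmoid (-x) : ℂ) ^ k * f x := by
  induction k with
  | zero => simp
  | succ k ih =>
    rw [Function.iterate_succ_apply']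
    filter_upwards [coeFn_sigmoidMul (sigmoidMul^[k] f), ih] with x h1 h2
    rw [h1, h2]
    ring

theorem sigmoidMul_mem_expDomain {f : Lp ℂ 2 (volume : Measure ℝ)} (hf : f ∈ expDomain) :
    sigmoidMul f ∈ expDomain := fun n hn =>
  (hf n hn).sigmoid_neg_mul.ae_eq <| by
    filter_upwards [coeFn_sigmoidMul f] with x hx
    rw [hx]
    ring

def CommutesWithExpMul (M : Lp ℂ 2 (volume : Measure ℝ) →L[ℂ] Lp ℂ 2 (volume : Measure ℝ)) :
    Prop :=
  ∀ n : ℕ, 0 < n → ∀ f g : Lp ℂ 2 (volume : Measure ℝ), f ∈ expDomain →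
    (∀ᵐ x : ℝ, g x = (Real.exp (n * x) : ℂ) * f x) →
    (∀ᵐ x : ℝ, (M g) x = (Real.exp (n * x) : ℂ) * (M f) x)

section CommutesWithExpMul

variable {M : Lp ℂ 2 (volume : Measure ℝ) →L[ℂ] Lp ℂ 2 (volume : Measure ℝ)}

theorem coeFn_map_sigmoidMul (hM : CommutesWithExpMul M) {f : Lp ℂ 2 (volume : Measure ℝ)}
    (hf : f ∈ expDomain) :
    M (sigmoidMul f) =ᵐ[volume] fun x => (Real.sigmoid (-x) : ℂ) * M f x := by
  set u := sigmoidMul f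
  have hu := sigmoidMul_mem_expDomain hf
  set g := (hu 1 one_pos).toLp
  have hg : ∀ᵐ x : ℝ, g x = (Real.exp ((1 : ℕ) * x) : ℂ) * u x := (hu 1 one_pos).coeFn_toLp
  have hf_eq : f = g + u := by
    refine Lp.ext ?_
    filter_upwards [Lp.coeFn_add g u, hg, coeFn_sigmoidMul f] with x hgu hgx hux
    rw [hgu, Pi.add_apply, hgx, hux, Nat.cast_one, one_mul]
    linear_combination (-(f x)) * exp_mul_sigmoid_neg_add_sigmoid_neg x
  have hMf : M f =ᵐ[volume] ⇑(M g) + ⇑(M u) := by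
    rw [hf_eq, map_add]
    exact Lp.coeFn_add _ _
  filter_upwards [hMf, hM 1 one_pos u g hu hg] with x hMfx hMgx
  rw [hMfx, Pi.add_apply, hMgx, Nat.cast_one, one_mul]
  linear_combination (-(M u x)) * exp_mul_sigmoid_neg_add_sigmoid_neg x

theorem coeFn_map_iterate_sigmoidMul (hM : CommutesWithExpMul M)
    {f : Lp ℂ 2 (volume : Measure ℝ)} (hf : f ∈ expDomain) (k : ℕ) :
    M (sigmoidMul^[k] f) =ᵐ[volume] fun x => (Real.sigmoid (-x) : ℂ) ^ k * M f x := by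
  induction k with
  | zero => simp
  | succ k ih =>
    rw [Function.iterate_succ_apply']
    have hk : sigmoidMul^[k] f ∈ expDomain :=
      MapsTo.iterate (fun _ => sigmoidMul_mem_expDomain) k hf
    filter_upwards [coeFn_map_sigmoidMul hM hk, ih] with x h1 h2
    rw [h1, h2]
    ring

theorem exists_map_eq_polynomial_sigmoid_mul (hM : CommutesWithExpMul M)
    {f : Lp ℂ 2 (volume : Measure ℝ)} (hf : f ∈ expDomain) (P : ℂ[X]) :
    ∃ v : Lp ℂ 2 (volume : Measure ℝ),
      (v =ᵐ[volume] fun x => P.eval (Real.sigmoid (-x) : ℂ) * f x) ∧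
      (M v =ᵐ[volume] fun x => P.eval (Real.sigmoid (-x) : ℂ) * M f x) := by
  induction P using Polynomial.induction_on' with
  | add P Q hP hQ =>
    obtain ⟨v, hv, hMv⟩ := hP
    obtain ⟨w, hw, hMw⟩ := hQ
    refine ⟨v + w, ?_, ?_⟩
    · filter_upwards [Lp.coeFn_add v w, hv, hw] with x h h1 h2
      rw [h, Pi.add_apply, h1, h2, eval_add, add_mul]
    · filter_upwards [map_add M v w ▸ Lp.coeFn_add (M v) (M w), hMv, hMw] with x h h1 h2
      rw [h, Pi.add_apply, h1, h2, eval_add, add_mul]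
  | monomial n a =>
    refine ⟨a • sigmoidMul^[n] f, ?_, ?_⟩
    · filter_upwards [Lp.coeFn_smul a (sigmoidMul^[n] f), coeFn_iterate_sigmoidMul f n]
        with x h1 h2
      rw [h1, Pi.smul_apply, h2, eval_monomial, smul_eq_mul, mul_assoc]
    · filter_upwards [map_smul M a (sigmoidMul^[n] f) ▸ Lp.coeFn_smul a (M (sigmoidMul^[n] f)),
        coeFn_map_iterate_sigmoidMul hM hf n] with x h1 h2
      rw [h1, Pi.smul_apply, h2, eval_monomial, smul_eq_mul, mul_assoc]

theorem ae_gaussian_mul_map_eq (hM : CommutesWithExpMul M) (f : Lp ℂ 2 (volume : Measure ℝ)) :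
    ∀ᵐ x, gaussian x * M f x = M gaussianLp x * f x := by
  refine (isClosed_setOf_ae_mul_eq_mul M.continuous gaussian ⇑(M gaussianLp)).closure_subset
    (Metric.mem_closure_iff.2 fun ε hε => ?_)
  obtain ⟨P, hP⟩ := exists_polynomial_sigmoid_mul_near continuous_gaussian gaussian_ne_zero
    memLp_gaussian (Lp.memLp f) hε
  obtain ⟨v, hv, hMv⟩ := exists_map_eq_polynomial_sigmoid_mul hM gaussianLp_mem_expDomain P
  refine ⟨v, ?_, ?_⟩
  · filter_upwards [hv, hMv, coeFn_gaussianLp] with x h1 h2 h3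
    rw [h1, h2, h3]
    ring
  · rw [Lp.dist_def]
    refine ENNReal.toReal_lt_of_lt_ofReal (lt_of_eq_of_lt (eLpNorm_congr_ae ?_) hP)
    filter_upwards [hv, coeFn_gaussianLp] with x h1 h2
    rw [Pi.sub_apply, Pi.sub_apply, h1, h2]

end CommutesWithExpMul

end ExpCommutant

end

open ExpCommutant in
theorem commutant_of_exponentials_is_multiplication_general
    (M : Lp ℂ 2 (volume : Measure ℝ) →L[ℂ] Lp ℂ 2 (volume : Measure ℝ))
    (E : Set (Lp ℂ 2 (volume : Measure ℝ)))
    (hE : E = {f | ∀ n : ℕ, 0 < n →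
      MemLp (fun x : ℝ => (Real.exp (n * x) : ℂ) * f x) 2 (volume : Measure ℝ)})
    (hcomm : ∀ (n : ℕ), 0 < n → ∀ f g : Lp ℂ 2 (volume : Measure ℝ), f ∈ E →
      (∀ᵐ x : ℝ, g x = (Real.exp (n * x) : ℂ) * f x) →
      (∀ᵐ x : ℝ, (M g) x = (Real.exp (n * x) : ℂ) * (M f) x)) :
    ∃ F : ℝ → ℂ, Measurable F ∧ ∀ f ∈ E, ∀ᵐ x : ℝ, (M f) x = F x * f x := by
  subst hE
  have hM : CommutesWithExpMul M := hcomm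
  have hMg := Lp.aestronglyMeasurable (M gaussianLp)
  refine ⟨fun x => hMg.mk _ x / gaussian x,
    hMg.stronglyMeasurable_mk.measurable.div continuous_gaussian.measurable, fun f _ => ?_⟩
  filter_upwards [ae_gaussian_mul_map_eq hM f, hMg.ae_eq_mk] with x hx hmk
  rw [← hmk, div_mul_eq_mul_div, ← hx, mul_div_cancel_left₀ _ (gaussian_ne_zero x)]

/-- A bounded operator M on L²(ℝ) which preserves the dense domain
E = {f : e^{nx} f ∈ L² for all n > 0} and commutes on it with multiplication by e^{nx}
for every positive integer n is multiplication by a fixed measurable function F. -/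
theorem commutant_of_exponentials_is_multiplication
    (M : Lp ℂ 2 (volume : Measure ℝ) →L[ℂ] Lp ℂ 2 (volume : Measure ℝ))
    (E : Set (Lp ℂ 2 (volume : Measure ℝ)))
    (hE : E = {f | ∀ n : ℕ, 0 < n →
      MemLp (fun x : ℝ => (Real.exp (n * x) : ℂ) * f x) 2 (volume : Measure ℝ)})
    (hME : ∀ f ∈ E, M f ∈ E)
    (hcomm : ∀ (n : ℕ), 0 < n → ∀ f g : Lp ℂ 2 (volume : Measure ℝ), f ∈ E →
      (∀ᵐ x : ℝ, g x = (Real.exp (n * x) : ℂ) * f x) →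
      (∀ᵐ x : ℝ, (M g) x = (Real.exp (n * x) : ℂ) * (M f) x)) :
    ∃ F : ℝ → ℂ, Measurable F ∧ ∀ f ∈ E, ∀ᵐ x : ℝ, (M f) x = F x * f x :=
  commutant_of_exponentials_is_multiplication_general M E hE hcomm
end
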